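/- Let a₂₀, b₂₀ ∈ ℝ, let p, q, r : ℝ² → ℝ be smooth functions with vanishing 2-jet at the origin, and let f(x,y) = (x, a₂₀x² + y² + p(x,y), b₂₀x² + q(x,y), r(x,y)). For a = (0, v₂, v₃, v₄) ∈ ℝ⁴, the Hessian of d_a at the origin equals the diagonal matrix [[2 − 4a₂₀v₂ − 4b₂₀v₃, 0], [0, −4v₂]], and it is degenerate if and only if v₂·(2a₂₀v₂ + 2b₂₀v₃ − 1) = 0. Hence the focal set at the origin is the union of the plane {v₂ = 0} and the plane {2a₂₀v₂ + 2b₂₀v₃ = 1}. -/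

import Mathlib

/-- Partial derivative in the first variable of a function of two real variables. -/
noncomputable def pdx (g : ℝ → ℝ → ℝ) (x y : ℝ) : ℝ := deriv (fun t => g t y) x

/-- Partial derivative in the second variable of a function of two real variables. -/
noncomputable def pdy (g : ℝ → ℝ → ℝ) (x y : ℝ) : ℝ := deriv (fun t => g x t) y

/-- The Hessian matrix at the origin of a function of two real variables. -/
noncomputable def hessAt0 (g : ℝ → ℝ → ℝ) : Matrix (Fin 2) (Fin 2) ℝ :=
  !![pdx (pdx g) 0 0, pdy (pdx g) 0 0;
     pdx (pdy g) 0 0, pdy (pdy g) 0 0]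

/-- A function of two real variables has vanishing 2-jet at the origin: its value and all
first- and second-order partial derivatives vanish at `(0,0)`. -/
noncomputable def jet2ZeroAt0 (g : ℝ → ℝ → ℝ) : Prop :=
  g 0 0 = 0 ∧ pdx g 0 0 = 0 ∧ pdy g 0 0 = 0 ∧ hessAt0 g = 0

section helpers
variable {h : ℝ → ℝ → ℝ}

lemma hasDerivAt_fst (hF : ContDiff ℝ (⊤ : ℕ∞) (fun w : ℝ × ℝ => h w.1 w.2)) (x y : ℝ) :
    HasDerivAt (fun t => h t y) (pdx h x y) x := by
  have hd := (hF.differentiable (by simp) (x, y)).hasFDerivAt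
  have hline : HasDerivAt (fun t : ℝ => ((t, y) : ℝ × ℝ)) (1, 0) x :=
    (hasDerivAt_id x).prodMk (hasDerivAt_const x y)
  have H := hd.comp_hasDerivAt x hline
  have he : pdx h x y = fderiv ℝ (fun w : ℝ × ℝ => h w.1 w.2) (x, y) (1, 0) := H.deriv
  rw [he]; exact H

lemma hasDerivAt_snd (hF : ContDiff ℝ (⊤ : ℕ∞) (fun w : ℝ × ℝ => h w.1 w.2)) (x y : ℝ) :
    HasDerivAt (fun t => h x t) (pdy h x y) y := by
  have hd := (hF.differentiable (by simp) (x, y)).hasFDerivAt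
  have hline : HasDerivAt (fun t : ℝ => ((x, t) : ℝ × ℝ)) (0, 1) y :=
    (hasDerivAt_const y x).prodMk (hasDerivAt_id y)
  have H := hd.comp_hasDerivAt y hline
  have he : pdy h x y = fderiv ℝ (fun w : ℝ × ℝ => h w.1 w.2) (x, y) (0, 1) := H.deriv
  rw [he]; exact H

lemma contDiff_pdx (hF : ContDiff ℝ (⊤ : ℕ∞) (fun w : ℝ × ℝ => h w.1 w.2)) :
    ContDiff ℝ (⊤ : ℕ∞) (fun w : ℝ × ℝ => pdx h w.1 w.2) := by
  have he : (fun w : ℝ × ℝ => pdx h w.1 w.2)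
      = fun w : ℝ × ℝ => fderiv ℝ (fun w : ℝ × ℝ => h w.1 w.2) w (1, 0) := by
    funext w
    have hline : HasDerivAt (fun t : ℝ => ((t, w.2) : ℝ × ℝ)) (1, 0) w.1 :=
      (hasDerivAt_id _).prodMk (hasDerivAt_const _ _)
    exact ((hF.differentiable (by simp) (w.1, w.2)).hasFDerivAt.comp_hasDerivAt w.1 hline).deriv
  rw [he]
  exact (hF.fderiv_right (by simp)).clm_apply contDiff_const

lemma contDiff_pdy (hF : ContDiff ℝ (⊤ : ℕ∞) (fun w : ℝ × ℝ => h w.1 w.2)) :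
    ContDiff ℝ (⊤ : ℕ∞) (fun w : ℝ × ℝ => pdy h w.1 w.2) := by
  have he : (fun w : ℝ × ℝ => pdy h w.1 w.2)
      = fun w : ℝ × ℝ => fderiv ℝ (fun w : ℝ × ℝ => h w.1 w.2) w (0, 1) := by
    funext w
    have hline : HasDerivAt (fun t : ℝ => ((w.1, t) : ℝ × ℝ)) (0, 1) w.2 :=
      (hasDerivAt_const _ _).prodMk (hasDerivAt_id _)
    exact ((hF.differentiable (by simp) (w.1, w.2)).hasFDerivAt.comp_hasDerivAt w.2 hline).deriv
  rw [he]
  exact (hF.fderiv_right (by simp)).clm_apply contDiff_const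

lemma jet_entries (hj : jet2ZeroAt0 h) :
    h 0 0 = 0 ∧ pdx h 0 0 = 0 ∧ pdy h 0 0 = 0 ∧ pdx (pdx h) 0 0 = 0 ∧
      pdy (pdx h) 0 0 = 0 ∧ pdx (pdy h) 0 0 = 0 ∧ pdy (pdy h) 0 0 = 0 := by
  obtain ⟨h0, h1, h2, hH⟩ := hj
  unfold hessAt0 at hH
  refine ⟨h0, h1, h2, ?_, ?_, ?_, ?_⟩
  · simpa using congrFun (congrFun hH 0) 0
  · simpa using congrFun (congrFun hH 0) 1
  · simpa using congrFun (congrFun hH 1) 0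
  · simpa using congrFun (congrFun hH 1) 1

lemma quad (u w : ℝ → ℝ) (u' w' : ℝ) (hu : HasDerivAt u u' 0) (hw : HasDerivAt w w' 0) :
    HasDerivAt (fun t => 2 * (u t * w t)) (2 * (u' * w 0 + u 0 * w')) 0 :=
  (hu.mul hw).const_mul 2

end helpers

section formulas
variable (a₂₀ b₂₀ : ℝ) (p q r : ℝ → ℝ → ℝ)

lemma hgx (hp : ContDiff ℝ (⊤ : ℕ∞) (fun w : ℝ × ℝ => p w.1 w.2))
    (hq : ContDiff ℝ (⊤ : ℕ∞) (fun w : ℝ × ℝ => q w.1 w.2))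
    (hr : ContDiff ℝ (⊤ : ℕ∞) (fun w : ℝ × ℝ => r w.1 w.2)) (v₂ v₃ v₄ : ℝ) (x y : ℝ) :
    pdx (fun x y => x ^ 2 + (a₂₀ * x ^ 2 + y ^ 2 + p x y - v₂) ^ 2
        + (b₂₀ * x ^ 2 + q x y - v₃) ^ 2 + (r x y - v₄) ^ 2) x y
      = 2 * x + 2 * ((a₂₀ * x ^ 2 + y ^ 2 + p x y - v₂) * (2 * a₂₀ * x + pdx p x y))
        + 2 * ((b₂₀ * x ^ 2 + q x y - v₃) * (2 * b₂₀ * x + pdx q x y))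
        + 2 * ((r x y - v₄) * pdx r x y) := by
  have hp1 := hasDerivAt_fst hp x y
  have hq1 := hasDerivAt_fst hq x y
  have hr1 := hasDerivAt_fst hr x y
  have hA := ((((hasDerivAt_pow 2 x).const_mul a₂₀).add_const (y ^ 2)).add hp1).sub_const v₂
  have hB := (((hasDerivAt_pow 2 x).const_mul b₂₀).add hq1).sub_const v₃
  have hC := hr1.sub_const v₄
  have H := (((hasDerivAt_pow 2 x).add (hA.pow 2)).add (hB.pow 2)).add (hC.pow 2)
  exact H.deriv.trans (by simp only [Pi.add_apply]; push_cast; ring)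

lemma hgy (hp : ContDiff ℝ (⊤ : ℕ∞) (fun w : ℝ × ℝ => p w.1 w.2))
    (hq : ContDiff ℝ (⊤ : ℕ∞) (fun w : ℝ × ℝ => q w.1 w.2))
    (hr : ContDiff ℝ (⊤ : ℕ∞) (fun w : ℝ × ℝ => r w.1 w.2)) (v₂ v₃ v₄ : ℝ) (x y : ℝ) :
    pdy (fun x y => x ^ 2 + (a₂₀ * x ^ 2 + y ^ 2 + p x y - v₂) ^ 2
        + (b₂₀ * x ^ 2 + q x y - v₃) ^ 2 + (r x y - v₄) ^ 2) x y
      = 2 * ((a₂₀ * x ^ 2 + y ^ 2 + p x y - v₂) * (2 * y + pdy p x y))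
        + 2 * ((b₂₀ * x ^ 2 + q x y - v₃) * pdy q x y)
        + 2 * ((r x y - v₄) * pdy r x y) := by
  have hp1 := hasDerivAt_snd hp x y
  have hq1 := hasDerivAt_snd hq x y
  have hr1 := hasDerivAt_snd hr x y
  have hA := (((hasDerivAt_const y (a₂₀ * x ^ 2)).add ((hasDerivAt_pow 2 y))).add hp1).sub_const v₂
  have hB := ((hasDerivAt_const y (b₂₀ * x ^ 2)).add hq1).sub_const v₃
  have hC := hr1.sub_const v₄
  have H := (((hasDerivAt_const y (x ^ 2)).add (hA.pow 2)).add (hB.pow 2)).add (hC.pow 2)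
  exact H.deriv.trans (by simp only [Pi.add_apply]; push_cast; ring)

end formulas

lemma hess_main (a₂₀ b₂₀ : ℝ) (p q r : ℝ → ℝ → ℝ)
    (hp : ContDiff ℝ (⊤ : ℕ∞) (fun w : ℝ × ℝ => p w.1 w.2))
    (hq : ContDiff ℝ (⊤ : ℕ∞) (fun w : ℝ × ℝ => q w.1 w.2))
    (hr : ContDiff ℝ (⊤ : ℕ∞) (fun w : ℝ × ℝ => r w.1 w.2))
    (hpj : jet2ZeroAt0 p) (hqj : jet2ZeroAt0 q) (hrj : jet2ZeroAt0 r) (v₂ v₃ v₄ : ℝ) :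
    hessAt0 (fun x y => x ^ 2 + (a₂₀ * x ^ 2 + y ^ 2 + p x y - v₂) ^ 2
        + (b₂₀ * x ^ 2 + q x y - v₃) ^ 2 + (r x y - v₄) ^ 2)
      = !![2 - 4 * a₂₀ * v₂ - 4 * b₂₀ * v₃, 0; 0, -4 * v₂] := by
  obtain ⟨p0, px0, py0, pxx, pxy, pyx, pyy⟩ := jet_entries hpj
  obtain ⟨q0, qx0, qy0, qxx, qxy, qyx, qyy⟩ := jet_entries hqj
  obtain ⟨r0, rx0, ry0, rxx, rxy, ryx, ryy⟩ := jet_entries hrj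
  have hfx : (fun t : ℝ => pdx (fun x y => x ^ 2 + (a₂₀ * x ^ 2 + y ^ 2 + p x y - v₂) ^ 2
        + (b₂₀ * x ^ 2 + q x y - v₃) ^ 2 + (r x y - v₄) ^ 2) t 0)
      = fun t : ℝ => 2 * t + 2 * ((a₂₀ * t ^ 2 + (0:ℝ) ^ 2 + p t 0 - v₂) * (2 * a₂₀ * t + pdx p t 0))
        + 2 * ((b₂₀ * t ^ 2 + q t 0 - v₃) * (2 * b₂₀ * t + pdx q t 0))
        + 2 * ((r t 0 - v₄) * pdx r t 0) :=
    funext fun t => hgx a₂₀ b₂₀ p q r hp hq hr v₂ v₃ v₄ t 0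
  have hfx' : (fun t : ℝ => pdx (fun x y => x ^ 2 + (a₂₀ * x ^ 2 + y ^ 2 + p x y - v₂) ^ 2
        + (b₂₀ * x ^ 2 + q x y - v₃) ^ 2 + (r x y - v₄) ^ 2) 0 t)
      = fun t : ℝ => 2 * (0:ℝ) + 2 * ((a₂₀ * (0:ℝ) ^ 2 + t ^ 2 + p 0 t - v₂) * (2 * a₂₀ * 0 + pdx p 0 t))
        + 2 * ((b₂₀ * (0:ℝ) ^ 2 + q 0 t - v₃) * (2 * b₂₀ * 0 + pdx q 0 t))
        + 2 * ((r 0 t - v₄) * pdx r 0 t) :=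
    funext fun t => hgx a₂₀ b₂₀ p q r hp hq hr v₂ v₃ v₄ 0 t
  have hfy : (fun t : ℝ => pdy (fun x y => x ^ 2 + (a₂₀ * x ^ 2 + y ^ 2 + p x y - v₂) ^ 2
        + (b₂₀ * x ^ 2 + q x y - v₃) ^ 2 + (r x y - v₄) ^ 2) t 0)
      = fun t : ℝ => 2 * ((a₂₀ * t ^ 2 + (0:ℝ) ^ 2 + p t 0 - v₂) * (2 * (0:ℝ) + pdy p t 0))
        + 2 * ((b₂₀ * t ^ 2 + q t 0 - v₃) * pdy q t 0)
        + 2 * ((r t 0 - v₄) * pdy r t 0) :=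
    funext fun t => hgy a₂₀ b₂₀ p q r hp hq hr v₂ v₃ v₄ t 0
  have hfy' : (fun t : ℝ => pdy (fun x y => x ^ 2 + (a₂₀ * x ^ 2 + y ^ 2 + p x y - v₂) ^ 2
        + (b₂₀ * x ^ 2 + q x y - v₃) ^ 2 + (r x y - v₄) ^ 2) 0 t)
      = fun t : ℝ => 2 * ((a₂₀ * (0:ℝ) ^ 2 + t ^ 2 + p 0 t - v₂) * (2 * t + pdy p 0 t))
        + 2 * ((b₂₀ * (0:ℝ) ^ 2 + q 0 t - v₃) * pdy q 0 t)
        + 2 * ((r 0 t - v₄) * pdy r 0 t) :=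
    funext fun t => hgy a₂₀ b₂₀ p q r hp hq hr v₂ v₃ v₄ 0 t
  -- entry (0,0)
  have e00 : pdx (pdx (fun x y => x ^ 2 + (a₂₀ * x ^ 2 + y ^ 2 + p x y - v₂) ^ 2
        + (b₂₀ * x ^ 2 + q x y - v₃) ^ 2 + (r x y - v₄) ^ 2)) 0 0
      = 2 - 4 * a₂₀ * v₂ - 4 * b₂₀ * v₃ := by
    show deriv (fun t : ℝ => pdx (fun x y => x ^ 2 + (a₂₀ * x ^ 2 + y ^ 2 + p x y - v₂) ^ 2
        + (b₂₀ * x ^ 2 + q x y - v₃) ^ 2 + (r x y - v₄) ^ 2) t 0) 0 = _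
    rw [hfx]
    have hT : HasDerivAt (fun t : ℝ => 2 * t) 2 0 := by
      simpa using (hasDerivAt_id (0:ℝ)).const_mul 2
    have hu1 : HasDerivAt (fun t : ℝ => a₂₀ * t ^ 2 + (0:ℝ) ^ 2 + p t 0 - v₂) 0 0 := by
      have h := ((((hasDerivAt_pow 2 (0:ℝ)).const_mul a₂₀).add_const ((0:ℝ) ^ 2)).add
        (hasDerivAt_fst hp 0 0)).sub_const v₂
      simpa [px0] using h
    have hw1 : HasDerivAt (fun t : ℝ => 2 * a₂₀ * t + pdx p t 0) (2 * a₂₀) 0 := by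
      have h := ((hasDerivAt_id (0:ℝ)).const_mul (2 * a₂₀)).add
        (hasDerivAt_fst (contDiff_pdx hp) 0 0)
      simpa [pxx, Pi.add_def] using h
    have hu2 : HasDerivAt (fun t : ℝ => b₂₀ * t ^ 2 + q t 0 - v₃) 0 0 := by
      have h := (((hasDerivAt_pow 2 (0:ℝ)).const_mul b₂₀).add
        (hasDerivAt_fst hq 0 0)).sub_const v₃
      simpa [qx0] using h
    have hw2 : HasDerivAt (fun t : ℝ => 2 * b₂₀ * t + pdx q t 0) (2 * b₂₀) 0 := by
      have h := ((hasDerivAt_id (0:ℝ)).const_mul (2 * b₂₀)).add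
        (hasDerivAt_fst (contDiff_pdx hq) 0 0)
      simpa [qxx, Pi.add_def] using h
    have hu3 : HasDerivAt (fun t : ℝ => r t 0 - v₄) 0 0 := by
      have h := (hasDerivAt_fst hr 0 0).sub_const v₄
      simpa [rx0] using h
    have hw3 : HasDerivAt (fun t : ℝ => pdx r t 0) 0 0 := by
      have h := hasDerivAt_fst (contDiff_pdx hr) 0 0
      simpa [rxx] using h
    have H := ((hT.add (quad _ _ _ _ hu1 hw1)).add (quad _ _ _ _ hu2 hw2)).add
      (quad _ _ _ _ hu3 hw3)
    exact H.deriv.trans (by simp [p0, px0, q0, qx0, r0, rx0]; ring)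
  -- entry (0,1) : pdy (pdx g)
  have e01 : pdy (pdx (fun x y => x ^ 2 + (a₂₀ * x ^ 2 + y ^ 2 + p x y - v₂) ^ 2
        + (b₂₀ * x ^ 2 + q x y - v₃) ^ 2 + (r x y - v₄) ^ 2)) 0 0 = 0 := by
    show deriv (fun t : ℝ => pdx (fun x y => x ^ 2 + (a₂₀ * x ^ 2 + y ^ 2 + p x y - v₂) ^ 2
        + (b₂₀ * x ^ 2 + q x y - v₃) ^ 2 + (r x y - v₄) ^ 2) 0 t) 0 = _
    rw [hfx']
    have hT : HasDerivAt (fun _ : ℝ => 2 * (0:ℝ)) 0 0 := hasDerivAt_const 0 (2 * (0:ℝ))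
    have hu1 : HasDerivAt (fun t : ℝ => a₂₀ * (0:ℝ) ^ 2 + t ^ 2 + p 0 t - v₂) 0 0 := by
      have h := (((hasDerivAt_const (0:ℝ) (a₂₀ * (0:ℝ) ^ 2)).add (hasDerivAt_pow 2 (0:ℝ))).add
        (hasDerivAt_snd hp 0 0)).sub_const v₂
      simpa [py0] using h
    have hw1 : HasDerivAt (fun t : ℝ => 2 * a₂₀ * 0 + pdx p 0 t) 0 0 := by
      have h := (hasDerivAt_const (0:ℝ) (2 * a₂₀ * 0)).add (hasDerivAt_snd (contDiff_pdx hp) 0 0)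
      simpa [pxy, Pi.add_def] using h
    have hu2 : HasDerivAt (fun t : ℝ => b₂₀ * (0:ℝ) ^ 2 + q 0 t - v₃) 0 0 := by
      have h := ((hasDerivAt_const (0:ℝ) (b₂₀ * (0:ℝ) ^ 2)).add
        (hasDerivAt_snd hq 0 0)).sub_const v₃
      simpa [qy0] using h
    have hw2 : HasDerivAt (fun t : ℝ => 2 * b₂₀ * 0 + pdx q 0 t) 0 0 := by
      have h := (hasDerivAt_const (0:ℝ) (2 * b₂₀ * 0)).add (hasDerivAt_snd (contDiff_pdx hq) 0 0)
      simpa [qxy, Pi.add_def] using h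
    have hu3 : HasDerivAt (fun t : ℝ => r 0 t - v₄) 0 0 := by
      have h := (hasDerivAt_snd hr 0 0).sub_const v₄
      simpa [ry0] using h
    have hw3 : HasDerivAt (fun t : ℝ => pdx r 0 t) 0 0 := by
      have h := hasDerivAt_snd (contDiff_pdx hr) 0 0
      simpa [rxy] using h
    have H := ((hT.add (quad _ _ _ _ hu1 hw1)).add (quad _ _ _ _ hu2 hw2)).add
      (quad _ _ _ _ hu3 hw3)
    exact H.deriv.trans (by simp [p0, px0, q0, qx0, r0, rx0])
  -- entry (1,0) : pdx (pdy g)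
  have e10 : pdx (pdy (fun x y => x ^ 2 + (a₂₀ * x ^ 2 + y ^ 2 + p x y - v₂) ^ 2
        + (b₂₀ * x ^ 2 + q x y - v₃) ^ 2 + (r x y - v₄) ^ 2)) 0 0 = 0 := by
    show deriv (fun t : ℝ => pdy (fun x y => x ^ 2 + (a₂₀ * x ^ 2 + y ^ 2 + p x y - v₂) ^ 2
        + (b₂₀ * x ^ 2 + q x y - v₃) ^ 2 + (r x y - v₄) ^ 2) t 0) 0 = _
    rw [hfy]
    have hu1 : HasDerivAt (fun t : ℝ => a₂₀ * t ^ 2 + (0:ℝ) ^ 2 + p t 0 - v₂) 0 0 := by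
      have h := ((((hasDerivAt_pow 2 (0:ℝ)).const_mul a₂₀).add_const ((0:ℝ) ^ 2)).add
        (hasDerivAt_fst hp 0 0)).sub_const v₂
      simpa [px0] using h
    have hw1 : HasDerivAt (fun t : ℝ => 2 * (0:ℝ) + pdy p t 0) 0 0 := by
      have h := (hasDerivAt_const (0:ℝ) (2 * (0:ℝ))).add (hasDerivAt_fst (contDiff_pdy hp) 0 0)
      simpa [pyx, Pi.add_def] using h
    have hu2 : HasDerivAt (fun t : ℝ => b₂₀ * t ^ 2 + q t 0 - v₃) 0 0 := by
      have h := (((hasDerivAt_pow 2 (0:ℝ)).const_mul b₂₀).add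
        (hasDerivAt_fst hq 0 0)).sub_const v₃
      simpa [qx0] using h
    have hw2 : HasDerivAt (fun t : ℝ => pdy q t 0) 0 0 := by
      have h := hasDerivAt_fst (contDiff_pdy hq) 0 0
      simpa [qyx] using h
    have hu3 : HasDerivAt (fun t : ℝ => r t 0 - v₄) 0 0 := by
      have h := (hasDerivAt_fst hr 0 0).sub_const v₄
      simpa [rx0] using h
    have hw3 : HasDerivAt (fun t : ℝ => pdy r t 0) 0 0 := by
      have h := hasDerivAt_fst (contDiff_pdy hr) 0 0
      simpa [ryx] using h
    have H := ((quad _ _ _ _ hu1 hw1).add (quad _ _ _ _ hu2 hw2)).add (quad _ _ _ _ hu3 hw3)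
    exact H.deriv.trans (by simp [p0, py0, q0, qy0, r0, ry0])
  -- entry (1,1) : pdy (pdy g)
  have e11 : pdy (pdy (fun x y => x ^ 2 + (a₂₀ * x ^ 2 + y ^ 2 + p x y - v₂) ^ 2
        + (b₂₀ * x ^ 2 + q x y - v₃) ^ 2 + (r x y - v₄) ^ 2)) 0 0 = -4 * v₂ := by
    show deriv (fun t : ℝ => pdy (fun x y => x ^ 2 + (a₂₀ * x ^ 2 + y ^ 2 + p x y - v₂) ^ 2
        + (b₂₀ * x ^ 2 + q x y - v₃) ^ 2 + (r x y - v₄) ^ 2) 0 t) 0 = _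
    rw [hfy']
    have hu1 : HasDerivAt (fun t : ℝ => a₂₀ * (0:ℝ) ^ 2 + t ^ 2 + p 0 t - v₂) 0 0 := by
      have h := (((hasDerivAt_const (0:ℝ) (a₂₀ * (0:ℝ) ^ 2)).add (hasDerivAt_pow 2 (0:ℝ))).add
        (hasDerivAt_snd hp 0 0)).sub_const v₂
      simpa [py0] using h
    have hw1 : HasDerivAt (fun t : ℝ => 2 * t + pdy p 0 t) 2 0 := by
      have h := ((hasDerivAt_id (0:ℝ)).const_mul 2).add (hasDerivAt_snd (contDiff_pdy hp) 0 0)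
      simpa [pyy, Pi.add_def] using h
    have hu2 : HasDerivAt (fun t : ℝ => b₂₀ * (0:ℝ) ^ 2 + q 0 t - v₃) 0 0 := by
      have h := ((hasDerivAt_const (0:ℝ) (b₂₀ * (0:ℝ) ^ 2)).add
        (hasDerivAt_snd hq 0 0)).sub_const v₃
      simpa [qy0] using h
    have hw2 : HasDerivAt (fun t : ℝ => pdy q 0 t) 0 0 := by
      have h := hasDerivAt_snd (contDiff_pdy hq) 0 0
      simpa [qyy] using h
    have hu3 : HasDerivAt (fun t : ℝ => r 0 t - v₄) 0 0 := by
      have h := (hasDerivAt_snd hr 0 0).sub_const v₄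
      simpa [ry0] using h
    have hw3 : HasDerivAt (fun t : ℝ => pdy r 0 t) 0 0 := by
      have h := hasDerivAt_snd (contDiff_pdy hr) 0 0
      simpa [ryy] using h
    have H := ((quad _ _ _ _ hu1 hw1).add (quad _ _ _ _ hu2 hw2)).add (quad _ _ _ _ hu3 hw3)
    exact H.deriv.trans (by simp [p0, py0, q0, qy0, r0, ry0]; ring)
  unfold hessAt0
  rw [e00, e01, e10, e11]

/-- For the normal form `f(x,y) = (x, a₂₀x² + y² + p, b₂₀x² + q, r)` (curvature parabola a
half-line) and `a = (0, v₂, v₃, v₄)`, the Hessian of `d_a` at the origin equals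
`[[2 − 4a₂₀v₂ − 4b₂₀v₃, 0], [0, −4v₂]]`, it is degenerate iff `v₂(2a₂₀v₂ + 2b₂₀v₃ − 1) = 0`,
and the focal set is the union of the planes `{v₂ = 0}` and `{2a₂₀v₂ + 2b₂₀v₃ = 1}`. -/
theorem stmt8 (a₂₀ b₂₀ : ℝ) (p q r : ℝ → ℝ → ℝ)
    (hp : ContDiff ℝ (⊤ : ℕ∞) (fun w : ℝ × ℝ => p w.1 w.2))
    (hq : ContDiff ℝ (⊤ : ℕ∞) (fun w : ℝ × ℝ => q w.1 w.2))
    (hr : ContDiff ℝ (⊤ : ℕ∞) (fun w : ℝ × ℝ => r w.1 w.2))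
    (hpj : jet2ZeroAt0 p) (hqj : jet2ZeroAt0 q) (hrj : jet2ZeroAt0 r) :
    (∀ v₂ v₃ v₄ : ℝ,
      hessAt0 (fun x y => x ^ 2 + (a₂₀ * x ^ 2 + y ^ 2 + p x y - v₂) ^ 2
        + (b₂₀ * x ^ 2 + q x y - v₃) ^ 2 + (r x y - v₄) ^ 2)
        = !![2 - 4 * a₂₀ * v₂ - 4 * b₂₀ * v₃, 0; 0, -4 * v₂] ∧
      ((hessAt0 (fun x y => x ^ 2 + (a₂₀ * x ^ 2 + y ^ 2 + p x y - v₂) ^ 2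
        + (b₂₀ * x ^ 2 + q x y - v₃) ^ 2 + (r x y - v₄) ^ 2)).det = 0 ↔
        v₂ * (2 * a₂₀ * v₂ + 2 * b₂₀ * v₃ - 1) = 0)) ∧
    ({w : ℝ × ℝ × ℝ |
        (hessAt0 (fun x y => x ^ 2 + (a₂₀ * x ^ 2 + y ^ 2 + p x y - w.1) ^ 2
          + (b₂₀ * x ^ 2 + q x y - w.2.1) ^ 2 + (r x y - w.2.2) ^ 2)).det = 0}
      = {w : ℝ × ℝ × ℝ | w.1 = 0} ∪
        {w : ℝ × ℝ × ℝ | 2 * a₂₀ * w.1 + 2 * b₂₀ * w.2.1 = 1}) := by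
  constructor
  · intro v₂ v₃ v₄
    refine ⟨hess_main a₂₀ b₂₀ p q r hp hq hr hpj hqj hrj v₂ v₃ v₄, ?_⟩
    rw [hess_main a₂₀ b₂₀ p q r hp hq hr hpj hqj hrj v₂ v₃ v₄, Matrix.det_fin_two_of]
    rw [show (2 - 4 * a₂₀ * v₂ - 4 * b₂₀ * v₃) * (-4 * v₂) - 0 * 0
        = 8 * (v₂ * (2 * a₂₀ * v₂ + 2 * b₂₀ * v₃ - 1)) from by ring]
    constructor
    · intro h; linarith
    · intro h; rw [h]; ring
  · ext w
    simp only [Set.mem_setOf_eq, Set.mem_union]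
    rw [hess_main a₂₀ b₂₀ p q r hp hq hr hpj hqj hrj w.1 w.2.1 w.2.2, Matrix.det_fin_two_of]
    rw [show (2 - 4 * a₂₀ * w.1 - 4 * b₂₀ * w.2.1) * (-4 * w.1) - 0 * 0
        = 8 * (w.1 * (2 * a₂₀ * w.1 + 2 * b₂₀ * w.2.1 - 1)) from by ring]
    constructor
    · intro h
      rcases mul_eq_zero.1 (show w.1 * (2 * a₂₀ * w.1 + 2 * b₂₀ * w.2.1 - 1) = 0 by linarith)
        with h' | h'
      · exact Or.inl h'
      · exact Or.inr (by linarith)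
    · rintro (h | h)
      · rw [h]; ring
      · linear_combination 8 * w.1 * h
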